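/- Let 𝔞_1,…,𝔞_N be finitely many holomorphic functions on X(R,δ) of the form 𝔞_p(w)=√−1·w+Σ_{κ∈S_p}c_{p,κ}·w^κ, where each S_p⊂(0,1) is finite and c_{p,κ}∈ℂ. Let ε∈(0,1) satisfy κ<1−ε for every κ∈⋃_pS_p, let A∈ℂ satisfy Re(√−1·A)>0 and Re(√−1·A·e^{√−1(1−ε)π})>0, and set g(w)=w+A·w^{1−ε}. Then there exist positive numbers R_2>R_1>R and C_1>0 such that: (i) Re(𝔞_p(w)) − Re(√−1·g(w)) < −C_1|w|^{1−ε} for every p=1,…,N and every w with |w|≥R_1 and Im w≥0; and (ii) {w∈X(R,δ): |g(w)|>R_2, Im g(w)≥0} ⊆ {w∈ℂ: |w|≥R_1, Im w≥0}. -/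

import Mathlib

/-- The branch of `log` on the sector around the positive imaginary axis:
`log w = log(-i w) + iπ/2`. -/
noncomputable def logS (w : ℂ) : ℂ :=
  Complex.log (-Complex.I * w) + (Real.pi / 2 : ℝ) * Complex.I

/-- The branch of the power `w ^ κ = exp (κ log w)` on the sector around the
positive imaginary axis. -/
noncomputable def powS (w : ℂ) (κ : ℝ) : ℂ := Complex.exp ((κ : ℂ) * logS w)

/-- The sector `X(R,δ) = {w : |w| > R, arg w ∈ (-δ, π + δ)}` around the positive
imaginary axis. -/
def sectorX (R δ : ℝ) : Set ℂ :=
  {w : ℂ | R < ‖w‖ ∧ |Complex.arg (-Complex.I * w)| < Real.pi / 2 + δ}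

/-! Write `w = r e^{iθ}` with `θ = argS w`, so that `w^κ = r^κ e^{iκθ}`. A sinusoid
`φ ↦ Re (B e^{iφ})` positive at both ends of an interval of length `< π` is positive on it; with
`B = i A` and the interval `[0, (1 - ε)π]` this makes `Re (i A w^{1-ε}) ≥ c r^{1-ε}` on the upper
half plane, which beats every term `c_κ w^κ`, `κ < 1 - ε`, and gives (i).

For (ii), `|w| < R₁` forces `|g w| ≤ (1 + |A|) R₁`. If `Im w < 0`, then
`Im (g w) = r sin θ - r^{1-ε} Re (i A e^{i(1-ε)θ})`: for `θ` near `0` or `π` the second term is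
negative by the hypotheses on `A`, and otherwise `sin θ` is bounded away from `0`, so that `r sin θ`
swamps it. -/

open Complex Filter Set Asymptotics
open scoped Real

noncomputable def argS (w : ℂ) : ℝ := arg (-I * w) + π / 2

lemma argS_mem_Ioc (w : ℂ) : argS w ∈ Ioc (-(π / 2)) (3 * π / 2) := by
  unfold argS
  constructor <;> linarith [neg_pi_lt_arg (-I * w), arg_le_pi (-I * w)]

lemma argS_mem_Icc_of_im_nonneg {w : ℂ} (hw : 0 ≤ w.im) : argS w ∈ Icc 0 π := by
  have : |arg (-I * w)| ≤ π / 2 := abs_arg_le_pi_div_two_iff.2 (by simpa [mul_re] using hw)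
  unfold argS
  constructor <;> linarith [abs_le.1 this]

lemma im_eq_norm_mul_sin_argS (w : ℂ) : w.im = ‖w‖ * Real.sin (argS w) := by
  have : ‖-I * w‖ = ‖w‖ := by simp
  rw [argS, Real.sin_add_pi_div_two, ← this, norm_mul_cos_arg]
  simp [mul_re]

lemma powS_eq_polar {w : ℂ} (hw : w ≠ 0) (κ : ℝ) :
    powS w κ = ((‖w‖ ^ κ : ℝ) : ℂ) * exp ((κ * argS w : ℝ) * I) := by
  have : ‖-I * w‖ = ‖w‖ := by simp
  rw [powS, logS, Complex.log, this, argS, Real.rpow_def_of_pos (norm_pos_iff.2 hw), ofReal_exp,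
    ← exp_add]
  push_cast
  ring_nf

lemma norm_powS {w : ℂ} (hw : w ≠ 0) (κ : ℝ) : ‖powS w κ‖ = ‖w‖ ^ κ := by
  rw [powS_eq_polar hw, norm_mul, norm_exp_ofReal_mul_I, mul_one, norm_real,
    Real.norm_of_nonneg (by positivity)]

lemma mul_powS (B : ℂ) {w : ℂ} (hw : w ≠ 0) (κ : ℝ) :
    B * powS w κ = ((‖w‖ ^ κ : ℝ) : ℂ) * (B * exp ((κ * argS w : ℝ) * I)) := by
  rw [powS_eq_polar hw, mul_left_comm]

lemma isLittleO_rpow_rpow_atTop {a b : ℝ} (h : a < b) :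
    (fun r : ℝ => r ^ a) =o[atTop] fun r => r ^ b := by
  refine isLittleO_iff_tendsto' ?_ |>.2 ?_
  · filter_upwards [eventually_gt_atTop 0] with r hr h0
    exact absurd h0 (Real.rpow_pos_of_pos hr b).ne'
  · refine (tendsto_rpow_neg_atTop (sub_pos.2 h)).congr' ?_
    filter_upwards [eventually_gt_atTop 0] with r hr
    rw [← Real.rpow_sub hr, neg_sub]

lemma eventually_lt_mul_rpow_of_isLittleO {f : ℝ → ℝ} {b c : ℝ}
    (hf : f =o[atTop] fun r => r ^ b) (hc : 0 < c) : ∀ᶠ r in atTop, f r < c * r ^ b := by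
  filter_upwards [hf.def (half_pos hc), eventually_gt_atTop 0] with r hle hr
  have hrb : 0 < r ^ b := Real.rpow_pos_of_pos hr b
  rw [Real.norm_eq_abs, Real.norm_eq_abs, abs_of_pos hrb] at hle
  linarith [le_abs_self (f r), mul_pos hc hrb]

lemma re_mul_exp_pos_of_mem_Icc {B : ℂ} {L φ : ℝ} (hL0 : 0 < L) (hLπ : L < π)
    (h0 : 0 < B.re) (hL : 0 < (B * exp (L * I)).re) (hφ : φ ∈ Icc 0 L) :
    0 < (B * exp (φ * I)).re := by
  have re_rot : ∀ ψ : ℝ, (B * exp (ψ * I)).re = B.re * Real.cos ψ - B.im * Real.sin ψ := by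
    intro ψ
    simp [exp_mul_I, mul_re, ← ofReal_cos, ← ofReal_sin]
  rw [re_rot] at hL ⊢
  obtain ⟨hφ0, hφL⟩ := hφ
  have hsinL : 0 < Real.sin L := Real.sin_pos_of_pos_of_lt_pi hL0 hLπ
  have hsinLφ : 0 ≤ Real.sin (L - φ) := Real.sin_nonneg_of_nonneg_of_le_pi (by linarith)
    (by linarith)
  -- `B e^{iφ}` is a combination of `B` and `B e^{iL}` with nonnegative, not both zero, weights.
  have key : (B.re * Real.cos φ - B.im * Real.sin φ) * Real.sin L
      = Real.sin (L - φ) * B.re + Real.sin φ * (B.re * Real.cos L - B.im * Real.sin L) := by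
    rw [Real.sin_sub]; ring
  refine pos_of_mul_pos_left (key ▸ ?_) hsinL.le
  rcases hφ0.eq_or_lt with rfl | hφ
  · simpa using mul_pos hsinL h0
  · have hsinφ : 0 < Real.sin φ := Real.sin_pos_of_pos_of_lt_pi hφ (by linarith)
    nlinarith [mul_nonneg hsinLφ h0.le, mul_pos hsinφ hL]

lemma exists_pos_le_re_mul_exp_of_mem_Icc {B : ℂ} {L : ℝ} (hL0 : 0 < L) (hLπ : L < π)
    (h0 : 0 < B.re) (hL : 0 < (B * exp (L * I)).re) :
    ∃ c > 0, ∀ φ ∈ Icc 0 L, c ≤ (B * exp (φ * I)).re := by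
  obtain ⟨φ₀, hφ₀, hmin⟩ := isCompact_Icc.exists_isMinOn (nonempty_Icc.2 hL0.le)
    (f := fun φ : ℝ => (B * exp (φ * I)).re) (by fun_prop)
  exact ⟨_, re_mul_exp_pos_of_mem_Icc hL0 hLπ h0 hL hφ₀, isMinOn_iff.1 hmin⟩

lemma exists_pos_mul_rpow_le_re_mul_powS {B : ℂ} {β : ℝ} (hβ0 : 0 < β) (hβ1 : β < 1)
    (h0 : 0 < B.re) (hπ : 0 < (B * exp ((β * π : ℝ) * I)).re) :
    ∃ c > 0, ∀ w : ℂ, w ≠ 0 → 0 ≤ w.im → c * ‖w‖ ^ β ≤ (B * powS w β).re := by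
  obtain ⟨c, hc, hle⟩ := exists_pos_le_re_mul_exp_of_mem_Icc (mul_pos hβ0 Real.pi_pos)
    (mul_lt_of_lt_one_left Real.pi_pos hβ1) h0 hπ
  refine ⟨c, hc, fun w hw hwim => ?_⟩
  obtain ⟨hθ0, hθπ⟩ := argS_mem_Icc_of_im_nonneg hwim
  rw [mul_powS B hw, re_ofReal_mul, mul_comm c]
  exact mul_le_mul_of_nonneg_left (hle _ ⟨by positivity, by gcongr⟩) (by positivity)

lemma eventually_norm_sum_mul_powS_lt (s : Finset ℝ) (a : ℝ → ℂ) {β c : ℝ}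
    (hs : ∀ κ ∈ s, κ < β) (hc : 0 < c) :
    ∀ᶠ R₁ in atTop, ∀ w : ℂ, R₁ ≤ ‖w‖ → ‖∑ κ ∈ s, a κ * powS w κ‖ < c * ‖w‖ ^ β := by
  have hsum : ∀ᶠ r in atTop, ∑ κ ∈ s, ‖a κ‖ * r ^ κ < c * r ^ β :=
    eventually_lt_mul_rpow_of_isLittleO
      (IsLittleO.fun_sum fun κ hκ => (isLittleO_rpow_rpow_atTop (hs κ hκ)).const_mul_left _) hc
  filter_upwards [eventually_forall_ge_atTop.2 (hsum.and (eventually_gt_atTop 0))]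
    with R₁ h w hw
  obtain ⟨hlt, hw0⟩ := h ‖w‖ hw
  calc ‖∑ κ ∈ s, a κ * powS w κ‖ ≤ ∑ κ ∈ s, ‖a κ‖ * ‖w‖ ^ κ := by
        refine (norm_sum_le _ _).trans (Finset.sum_le_sum fun κ _ => ?_)
        rw [norm_mul, norm_powS (norm_pos_iff.1 hw0)]
    _ < c * ‖w‖ ^ β := hlt

lemma sin_le_neg_sin_of_le_abs {θ η : ℝ} (hθ : θ ∈ Icc (-(π / 2)) (3 * π / 2))
    (hsin : Real.sin θ < 0) (hη0 : 0 < η) (h0 : η ≤ |θ|) (hπ : η ≤ |θ - π|) :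
    Real.sin θ ≤ -Real.sin η := by
  obtain ⟨hθl, hθr⟩ := hθ
  rcases lt_or_ge θ 0 with hneg | hnonneg
  · rw [abs_of_neg hneg] at h0
    simpa using Real.sin_le_sin_of_le_of_le_pi_div_two hθl (by linarith) (by linarith : θ ≤ -η)
  · have hgt : π < θ := by
      by_contra! hle
      exact hsin.not_ge (Real.sin_nonneg_of_nonneg_of_le_pi hnonneg hle)
    rw [abs_of_pos (sub_pos.2 hgt)] at hπ
    have := Real.sin_le_sin_of_le_of_le_pi_div_two (by linarith) (by linarith) hπ
    rw [Real.sin_sub_pi] at this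
    linarith

lemma eventually_mul_sin_lt_rpow_mul {g : ℝ → ℝ} {β K : ℝ} (hg : Continuous g)
    (hg0 : 0 < g 0) (hgπ : 0 < g π) (hK : ∀ θ, -K ≤ g θ) (hβ : β < 1) :
    ∀ᶠ r in atTop, ∀ θ ∈ Icc (-(π / 2)) (3 * π / 2), Real.sin θ < 0 →
      r * Real.sin θ < r ^ β * g θ := by
  obtain ⟨η₀, hη₀, hnear₀⟩ :=
    Metric.eventually_nhds_iff.1 ((hg.tendsto 0).eventually_const_lt hg0)
  obtain ⟨η₁, hη₁, hnear₁⟩ :=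
    Metric.eventually_nhds_iff.1 ((hg.tendsto π).eventually_const_lt hgπ)
  set η := min (min η₀ η₁) (π / 2)
  have hη : 0 < η := lt_min (lt_min hη₀ hη₁) (by positivity)
  have hsinη : 0 < Real.sin η :=
    Real.sin_pos_of_pos_of_lt_pi hη (by linarith [min_le_right (min η₀ η₁) (π / 2), Real.pi_pos])
  filter_upwards [eventually_lt_mul_rpow_of_isLittleO
      ((isLittleO_rpow_rpow_atTop hβ).const_mul_left K) hsinη, eventually_gt_atTop 0]
    with r hfar hr θ hθ hsin
  rw [Real.rpow_one] at hfar
  have hrβ : 0 < r ^ β := Real.rpow_pos_of_pos hr β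
  by_cases hnear : |θ| < η ∨ |θ - π| < η
  · have hgθ : 0 < g θ := by
      rcases hnear with h | h
      · exact hnear₀ (by rw [Real.dist_eq, sub_zero]; exact h.trans_le (by simp [η]))
      · exact hnear₁ (by rw [Real.dist_eq]; exact h.trans_le (by simp [η]))
    exact (mul_neg_of_pos_of_neg hr hsin).trans (mul_pos hrβ hgθ)
  · obtain ⟨h0, hπ⟩ := not_or.1 hnear
    have hfarθ := sin_le_neg_sin_of_le_abs hθ hsin hη (not_lt.1 h0) (not_lt.1 hπ)
    nlinarith [hK θ]

lemma eventually_im_add_mul_powS_neg {A : ℂ} {β : ℝ} (hβ : β < 1) (h0 : 0 < (I * A).re)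
    (hπ : 0 < (I * A * exp ((β * π : ℝ) * I)).re) :
    ∀ᶠ R₁ in atTop, ∀ w : ℂ, R₁ ≤ ‖w‖ → w.im < 0 → (w + A * powS w β).im < 0 := by
  have hsin := eventually_mul_sin_lt_rpow_mul (g := fun θ => (I * A * exp ((β * θ : ℝ) * I)).re)
    (K := ‖I * A‖) (by fun_prop) (by simpa using h0) hπ (fun θ => ?_) hβ
  · filter_upwards [eventually_forall_ge_atTop.2 (hsin.and (eventually_gt_atTop 0))]
      with R₁ h w hw hwim
    obtain ⟨hlt, hw0⟩ := h ‖w‖ hw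
    rw [im_eq_norm_mul_sin_argS] at hwim
    have := hlt (argS w) (Ioc_subset_Icc_self (argS_mem_Ioc w))
      (neg_of_mul_neg_right hwim (norm_nonneg w))
    rw [add_im, mul_powS A (norm_pos_iff.1 hw0), im_ofReal_mul, im_eq_norm_mul_sin_argS w]
    simp only [mul_assoc, I_mul_re] at this
    linarith
  · refine neg_le_of_abs_le ((abs_re_le_norm _).trans ?_)
    rw [norm_mul, norm_exp_ofReal_mul_I, mul_one]

lemma norm_add_mul_powS_le {A w : ℂ} {β R₁ : ℝ} (hw : w ≠ 0) (hβ0 : 0 ≤ β) (hβ1 : β ≤ 1)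
    (hR₁ : 1 ≤ R₁) (hwR₁ : ‖w‖ ≤ R₁) : ‖w + A * powS w β‖ ≤ (1 + ‖A‖) * R₁ := by
  have : ‖w‖ ^ β ≤ R₁ := calc
    ‖w‖ ^ β ≤ R₁ ^ β := by gcongr
    _ ≤ R₁ ^ (1 : ℝ) := Real.rpow_le_rpow_of_exponent_le hR₁ hβ1
    _ = R₁ := Real.rpow_one R₁
  calc ‖w + A * powS w β‖ ≤ ‖w‖ + ‖A‖ * ‖w‖ ^ β := by
        rw [← norm_powS hw, ← norm_mul]; exact norm_add_le _ _
    _ ≤ (1 + ‖A‖) * R₁ := by nlinarith [norm_nonneg A]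

theorem coordinate_choice_dominates_general
    (R δ : ℝ) (hR : 0 < R)
    (N : ℕ) (S : Fin N → Finset ℝ)
    (c : Fin N → ℝ → ℂ)
    (ε : ℝ) (hε0 : 0 < ε) (hε1 : ε < 1)
    (hεS : ∀ p : Fin N, ∀ κ ∈ S p, κ < 1 - ε)
    (A : ℂ) (hA1 : 0 < (Complex.I * A).re)
    (hA2 : 0 < (Complex.I * A * Complex.exp ((((1 - ε) * Real.pi : ℝ)) * Complex.I)).re)
    (aa : Fin N → ℂ → ℂ)
    (haa : ∀ (p : Fin N) (w : ℂ), aa p w = Complex.I * w + ∑ κ ∈ S p, c p κ * powS w κ)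
    (g : ℂ → ℂ) (hg : ∀ w : ℂ, g w = w + A * powS w (1 - ε)) :
    ∃ R₁ R₂ C₁ : ℝ, R < R₁ ∧ R₁ < R₂ ∧ 0 < C₁ ∧
      (∀ (p : Fin N) (w : ℂ), R₁ ≤ ‖w‖ → 0 ≤ w.im →
        (aa p w).re - (Complex.I * g w).re < -C₁ * ‖w‖ ^ (1 - ε)) ∧
      (∀ w ∈ sectorX R δ, R₂ < ‖g w‖ → 0 ≤ (g w).im →
        R₁ ≤ ‖w‖ ∧ 0 ≤ w.im) := by
  obtain ⟨c₀, hc₀, hdom⟩ :=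
    exists_pos_mul_rpow_le_re_mul_powS (by linarith) (by linarith) hA1 hA2
  have hpart1 : ∀ᶠ R₁ in atTop, ∀ (p : Fin N) (w : ℂ), R₁ ≤ ‖w‖ → 0 ≤ w.im →
      (aa p w).re - (I * g w).re < -(c₀ / 2) * ‖w‖ ^ (1 - ε) := by
    filter_upwards [eventually_all.2 fun p =>
        eventually_norm_sum_mul_powS_lt (S p) (c p) (hεS p) (half_pos hc₀),
      eventually_gt_atTop 0] with R₁ hsum hR₁ p w hw hwim
    have hw0 : w ≠ 0 := norm_pos_iff.1 (hR₁.trans_le hw)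
    have hsplit : aa p w - I * g w = ∑ κ ∈ S p, c p κ * powS w κ - I * A * powS w (1 - ε) := by
      rw [haa, hg]; ring
    rw [← sub_re, hsplit, sub_re]
    linarith [re_le_norm (∑ κ ∈ S p, c p κ * powS w κ), hsum p w hw, hdom w hw0 hwim]
  obtain ⟨R₁, ⟨hpart1, hpart2⟩, hRR₁, hR₁⟩ := (hpart1.and
    (eventually_im_add_mul_powS_neg (by linarith) hA1 hA2)).and
    ((eventually_gt_atTop R).and (eventually_ge_atTop 1)) |>.exists
  have hA : 0 < ‖A‖ := norm_pos_iff.2 fun h => by simp [h] at hA1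
  refine ⟨R₁, (1 + ‖A‖) * R₁, c₀ / 2, hRR₁, by nlinarith, half_pos hc₀, hpart1, ?_⟩
  rintro w ⟨hRw, -⟩ hgw hgim
  have hw0 : w ≠ 0 := norm_pos_iff.1 (hR.trans hRw)
  have hwR₁ : R₁ ≤ ‖w‖ := by
    by_contra! hlt
    exact hgw.not_ge (hg w ▸ norm_add_mul_powS_le hw0 (by linarith) (by linarith) hR₁ hlt.le)
  refine ⟨hwR₁, ?_⟩
  by_contra! him
  exact hgim.not_gt (hg w ▸ hpart2 w hwR₁ him)

/-- choice of a coordinate `g = w + A w^{1-ε}` dominating the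
exponents `𝔞_p`. -/
theorem coordinate_choice_dominates
    (R δ : ℝ) (hR : 0 < R) (hδ0 : 0 < δ) (hδ : δ < Real.pi / 2)
    (N : ℕ) (S : Fin N → Finset ℝ)
    (hS : ∀ p : Fin N, ∀ κ ∈ S p, 0 < κ ∧ κ < 1)
    (c : Fin N → ℝ → ℂ)
    (ε : ℝ) (hε0 : 0 < ε) (hε1 : ε < 1)
    (hεS : ∀ p : Fin N, ∀ κ ∈ S p, κ < 1 - ε)
    (A : ℂ) (hA1 : 0 < (Complex.I * A).re)
    (hA2 : 0 < (Complex.I * A * Complex.exp ((((1 - ε) * Real.pi : ℝ)) * Complex.I)).re)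
    (aa : Fin N → ℂ → ℂ)
    (haa : ∀ (p : Fin N) (w : ℂ), aa p w = Complex.I * w + ∑ κ ∈ S p, c p κ * powS w κ)
    (g : ℂ → ℂ) (hg : ∀ w : ℂ, g w = w + A * powS w (1 - ε)) :
    ∃ R₁ R₂ C₁ : ℝ, R < R₁ ∧ R₁ < R₂ ∧ 0 < C₁ ∧
      (∀ (p : Fin N) (w : ℂ), R₁ ≤ ‖w‖ → 0 ≤ w.im →
        (aa p w).re - (Complex.I * g w).re < -C₁ * ‖w‖ ^ (1 - ε)) ∧
      (∀ w ∈ sectorX R δ, R₂ < ‖g w‖ → 0 ≤ (g w).im →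
        R₁ ≤ ‖w‖ ∧ 0 ≤ w.im) :=
  coordinate_choice_dominates_general R δ hR N S c ε hε0 hε1 hεS A hA1 hA2 aa haa g hg
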